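/- Let 0 < ε < 1 and let g₀ > 0 be the unique positive real satisfying g₀·Q(g₀/√(2π)) = (1 − ε)·exp(−g₀²/(4π)). Suppose g > 0 and q > 0 satisfy g·exp(q²/2)·Q(q) = 1 − ε. Then q ≥ g/√(2π) if and only if g ≥ g₀. -/

import Mathlib

/-!
Write `R(x) = exp(x²/2) ∫ₓ^∞ exp(-u²/2) du` for the Mills ratio, so that both hypotheses read
`g R(q) = (1 - ε) √(2π) = g₀ R(g₀/√(2π))`. Shifting the integral gives
`R(x) = ∫₀^∞ exp(-t²/2 - x t) dt`, so `R` is strictly decreasing; substituting `s = g t` gives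
`g R(g/a) = ∫₀^∞ exp(-s²/(2g²) - s/a) ds`, strictly increasing in `g > 0`. Hence
`g/√(2π) ≤ q ↔ R(q) ≤ R(g/√(2π)) ↔ g₀ R(g₀/√(2π)) ≤ g R(g/√(2π)) ↔ g₀ ≤ g`.
-/

open MeasureTheory Real Set

noncomputable def Q (x : ℝ) : ℝ :=
  (Real.sqrt (2 * π))⁻¹ * ∫ u in Set.Ioi x, Real.exp (-u^2/2)

lemma setIntegral_lt_setIntegral_of_forall_lt {X : Type*} [MeasurableSpace X] {μ : Measure X}
    {s : Set X} {f g : X → ℝ} (hs : MeasurableSet s) (hμs : μ s ≠ 0)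
    (hf : IntegrableOn f s μ) (hg : IntegrableOn g s μ) (hlt : ∀ x ∈ s, f x < g x) :
    ∫ x in s, f x ∂μ < ∫ x in s, g x ∂μ := by
  rw [← sub_pos, ← integral_sub hg hf]
  have hsupp : Function.support (g - f) ∩ s = s :=
    inter_eq_right.mpr fun x hx ↦ (sub_pos.mpr (hlt x hx)).ne'
  refine (setIntegral_pos_iff_support_of_nonneg_ae ?_ (hg.sub hf)).mpr ?_
  · filter_upwards [ae_restrict_mem hs] with x hx using (sub_pos.mpr (hlt x hx)).le
  · rw [hsupp]
    exact pos_iff_ne_zero.mpr hμs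

lemma setIntegral_Ioi_comp_add_right (f : ℝ → ℝ) (a x : ℝ) :
    ∫ t in Ioi a, f (t + x) = ∫ u in Ioi (a + x), f u := by
  have h := (measurePreserving_add_right volume x).setIntegral_preimage_emb
    (measurableEmbedding_addRight x) f (Ioi (a + x))
  rwa [preimage_add_const_Ioi, add_sub_cancel_right] at h

lemma integrable_exp_neg_quadratic {b : ℝ} (hb : 0 < b) (c : ℝ) :
    Integrable fun t : ℝ ↦ exp (-(b * t ^ 2 + c * t)) := by
  have h := ((integrable_exp_neg_mul_sq hb).comp_add_right (c / (2 * b))).const_mul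
    (exp (c ^ 2 / (4 * b)))
  refine h.congr (ae_of_all _ fun t ↦ ?_)
  simp only [← exp_add]
  congr 1
  field_simp
  ring

noncomputable def millsRatio (x : ℝ) : ℝ :=
  exp (x ^ 2 / 2) * ∫ u in Ioi x, exp (-u ^ 2 / 2)

lemma millsRatio_eq_integral (x : ℝ) :
    millsRatio x = ∫ t in Ioi 0, exp (-(t ^ 2 / 2 + x * t)) := by
  rw [millsRatio, ← zero_add x, ← setIntegral_Ioi_comp_add_right, zero_add, ← integral_const_mul]
  refine setIntegral_congr_fun measurableSet_Ioi fun t _ ↦ ?_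
  rw [← exp_add]
  ring_nf

lemma millsRatio_strictAnti : StrictAnti millsRatio := by
  have hint (x : ℝ) : IntegrableOn (fun t ↦ exp (-(t ^ 2 / 2 + x * t))) (Ioi 0) := by
    refine (integrable_exp_neg_quadratic one_half_pos x).integrableOn.congr_fun
      (fun t _ ↦ ?_) measurableSet_Ioi
    ring_nf
  intro x y hxy
  simp only [millsRatio_eq_integral]
  refine setIntegral_lt_setIntegral_of_forall_lt measurableSet_Ioi (by simp) (hint y) (hint x)
    fun t (ht : 0 < t) ↦ exp_lt_exp.mpr ?_
  nlinarith

lemma mul_millsRatio_div_eq_integral {a g : ℝ} (hg : 0 < g) :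
    g * millsRatio (g / a) = ∫ s in Ioi 0, exp (-(s ^ 2 / (2 * g ^ 2) + s / a)) := by
  have h := integral_comp_mul_left_Ioi (fun s ↦ exp (-(s ^ 2 / (2 * g ^ 2) + s / a))) 0 hg
  rw [mul_zero, smul_eq_mul, eq_inv_mul_iff_mul_eq₀ hg.ne'] at h
  rw [← h, millsRatio_eq_integral]
  congr 1
  refine setIntegral_congr_fun measurableSet_Ioi fun t _ ↦ ?_
  congr 2
  field_simp

lemma strictMonoOn_mul_millsRatio_div (a : ℝ) :
    StrictMonoOn (fun g ↦ g * millsRatio (g / a)) (Ioi 0) := by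
  have hint (g : ℝ) (hg : 0 < g) :
      IntegrableOn (fun s ↦ exp (-(s ^ 2 / (2 * g ^ 2) + s / a))) (Ioi 0) := by
    have hb : 0 < 1 / (2 * g ^ 2) := by positivity
    refine (integrable_exp_neg_quadratic hb a⁻¹).integrableOn.congr_fun (fun s _ ↦ ?_)
      measurableSet_Ioi
    field_simp
  intro g (hg : 0 < g) g' (hg' : 0 < g') hgg'
  simp only [mul_millsRatio_div_eq_integral, hg, hg']
  refine setIntegral_lt_setIntegral_of_forall_lt measurableSet_Ioi (by simp) (hint g hg)
    (hint g' hg') fun s (hs : 0 < s) ↦ exp_lt_exp.mpr ?_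
  have : s ^ 2 / (2 * g' ^ 2) < s ^ 2 / (2 * g ^ 2) := by gcongr
  linarith

lemma mul_exp_mul_Q (g x : ℝ) :
    g * exp (x ^ 2 / 2) * Q x = g * millsRatio x / √(2 * π) := by
  rw [Q, millsRatio]
  ring

lemma sq_div_sqrt_two_pi_div_two (g : ℝ) : (g / √(2 * π)) ^ 2 / 2 = g ^ 2 / (4 * π) := by
  rw [div_pow, sq_sqrt (by positivity)]
  ring

theorem stmt_10_general (ε g₀ g q : ℝ) (hg₀ : 0 < g₀)
    (hg₀eq : g₀ * Q (g₀ / Real.sqrt (2*π)) = (1 - ε) * Real.exp (-g₀^2/(4*π)))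
    (hg : 0 < g)
    (heq : g * Real.exp (q^2/2) * Q q = 1 - ε) :
    g / Real.sqrt (2*π) ≤ q ↔ g₀ ≤ g := by
  have hS : 0 < √(2 * π) := by positivity
  have hg₀eq' : g₀ * exp ((g₀ / √(2 * π)) ^ 2 / 2) * Q (g₀ / √(2 * π)) = 1 - ε := by
    rw [mul_right_comm, hg₀eq, sq_div_sqrt_two_pi_div_two, mul_assoc, ← exp_add, neg_div,
      neg_add_cancel, exp_zero, mul_one]
  rw [mul_exp_mul_Q, div_eq_iff hS.ne'] at heq hg₀eq'
  calc g / √(2 * π) ≤ q ↔ millsRatio q ≤ millsRatio (g / √(2 * π)) :=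
        millsRatio_strictAnti.le_iff_ge.symm
    _ ↔ g * millsRatio q ≤ g * millsRatio (g / √(2 * π)) := (mul_le_mul_iff_right₀ hg).symm
    _ ↔ g₀ * millsRatio (g₀ / √(2 * π)) ≤ g * millsRatio (g / √(2 * π)) := by rw [heq, hg₀eq']
    _ ↔ g₀ ≤ g := (strictMonoOn_mul_millsRatio_div _).le_iff_le hg₀ hg

theorem stmt_10 (ε g₀ g q : ℝ) (hε0 : 0 < ε) (hε1 : ε < 1) (hg₀ : 0 < g₀)
    (hg₀eq : g₀ * Q (g₀ / Real.sqrt (2*π)) = (1 - ε) * Real.exp (-g₀^2/(4*π)))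
    (hg₀uniq : ∀ g' : ℝ, 0 < g' →
      g' * Q (g' / Real.sqrt (2*π)) = (1 - ε) * Real.exp (-g'^2/(4*π)) → g' = g₀)
    (hg : 0 < g) (hq : 0 < q)
    (heq : g * Real.exp (q^2/2) * Q q = 1 - ε) :
    g / Real.sqrt (2*π) ≤ q ↔ g₀ ≤ g :=
  stmt_10_general ε g₀ g q hg₀ hg₀eq hg heq
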